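/- arXiv:2002.00365 — 5 statements merged into one kernel-verified Lean document; each statement's English description precedes it below -/
import Mathlib

section
/- Let M be a real n×n Hurwitz matrix, let μ > 0, and let P be the symmetric positive definite matrix solving the Lyapunov equation P·M + Mᵀ·P = −2μ·Iₙ. Then λ_max(P)·α(M) ≤ −μ, where λ_max(P) is the largest eigenvalue of P and α(M) is the largest real part among the complex eigenvalues of M (the spectral abscissa of M). -/
/-!
For an eigenpair `M v = z v` of the complexification of `M`, the Lyapunov equation gives
`2 Re z · v*Pv = -2μ · v*v`. As `v*Pv > 0`, this forces `Re z ≤ 0`, and then the Rayleigh bound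
`v*Pv ≤ λ_max(P) · v*v` turns it into `λ_max(P) · Re z ≤ -μ`. The spectrum being finite and
nonempty, `α(M)` is the real part of one such eigenvalue.
-/

open Matrix

/-- A real square matrix is Hurwitz if every eigenvalue of its complexification
has strictly negative real part. -/
def IsHurwitz {m : Type*} [Fintype m] [DecidableEq m] (M : Matrix m m ℝ) : Prop :=
  ∀ z ∈ spectrum ℂ (M.map Complex.ofReal), z.re < 0

/-- The largest eigenvalue of a (symmetric) real matrix, expressed as the
supremum of its real spectrum. -/
noncomputable def maxEig {n : ℕ} (M : Matrix (Fin n) (Fin n) ℝ) : ℝ :=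
  sSup (spectrum ℝ M)

/-- The spectral abscissa of a real matrix: the largest real part among the
eigenvalues of its complexification. -/
noncomputable def specAbscissa {n : ℕ} (M : Matrix (Fin n) (Fin n) ℝ) : ℝ :=
  sSup (Complex.re '' spectrum ℂ (M.map Complex.ofReal))

open scoped ComplexOrder MatrixOrder

section

variable {n : Type*} [Fintype n]

theorem Matrix.dotProduct_lyapunov_mulVec {R : Type*} [CommRing R] [StarRing R]
    {A : Matrix n n R} (P : Matrix n n R) {z : R} {v : n → R} (hv : A *ᵥ v = z • v) :
    star v ⬝ᵥ ((P * A + Aᴴ * P) *ᵥ v) = (z + star z) * (star v ⬝ᵥ (P *ᵥ v)) := by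
  rw [add_mulVec, ← mulVec_mulVec, ← mulVec_mulVec, dotProduct_add, hv,
    dotProduct_mulVec (star v) Aᴴ, ← star_mulVec, hv, mulVec_smul, star_smul, dotProduct_smul,
    smul_dotProduct, smul_eq_mul, smul_eq_mul, add_mul]

variable [DecidableEq n]

theorem Matrix.exists_mulVec_eq_smul_of_mem_spectrum {K : Type*} [Field K] {A : Matrix n n K}
    {z : K} (hz : z ∈ spectrum K A) : ∃ v ≠ 0, A *ᵥ v = z • v := by
  rw [← Matrix.spectrum_toLin', ← Module.End.hasEigenvalue_iff_mem_spectrum] at hz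
  obtain ⟨v, hv⟩ := hz.exists_hasEigenvector
  exact ⟨v, hv.2, by simpa using hv.apply_eq_smul⟩

variable {𝕜 : Type*} [RCLike 𝕜]

theorem Matrix.IsHermitian.dotProduct_mulVec_le {A : Matrix n n 𝕜} (hA : A.IsHermitian)
    {r : ℝ} (hr : ∀ x ∈ spectrum ℝ A, x ≤ r) (v : n → 𝕜) :
    star v ⬝ᵥ (A *ᵥ v) ≤ r * (star v ⬝ᵥ v) := by
  have := (Matrix.le_iff.mp (le_algebraMap_of_spectrum_le hr)).dotProduct_mulVec_nonneg v
  simpa [sub_mulVec, dotProduct_sub, Algebra.algebraMap_eq_smul_one, smul_mulVec, sub_nonneg]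
    using this

theorem Matrix.PosDef.mul_re_le_of_lyapunov {A P : Matrix n n 𝕜} (hP : P.PosDef) {μ : ℝ}
    (hμ : 0 ≤ μ) (hLyap : P * A + Aᴴ * P = (-(2 * μ)) • 1) {r : ℝ}
    (hr : ∀ x ∈ spectrum ℝ P, x ≤ r) {z : 𝕜} (hz : z ∈ spectrum 𝕜 A) :
    r * RCLike.re z ≤ -μ := by
  obtain ⟨v, hv0, hv⟩ := exists_mulVec_eq_smul_of_mem_spectrum hz
  have hvPv := (RCLike.pos_iff.mp (hP.dotProduct_mulVec_pos hv0)).1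
  have hvv := (RCLike.pos_iff.mp (PosDef.one.dotProduct_mulVec_pos hv0)).1
  rw [one_mulVec] at hvv
  have hray := (RCLike.le_iff_re_im.mp (hP.isHermitian.dotProduct_mulVec_le hr v)).1
  have hlyap := congrArg RCLike.re (dotProduct_lyapunov_mulVec P hv)
  rw [hLyap, smul_mulVec, one_mulVec, dotProduct_smul, RCLike.star_def, RCLike.add_conj] at hlyap
  simp only [neg_smul, map_neg, RCLike.smul_re, mul_assoc, RCLike.re_ofReal_mul,
    RCLike.ofNat_mul_re] at hlyap hray
  have hre : RCLike.re z ≤ 0 := by nlinarith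
  nlinarith [mul_le_mul_of_nonpos_left hray hre]

theorem Matrix.PosDef.map_ofReal {P : Matrix n n ℝ} (hP : P.PosDef) :
    (P.map Complex.ofReal).PosDef := by
  have hPc : (P.map Complex.ofReal).IsHermitian :=
    hP.isHermitian.map Complex.ofReal fun _ => (Complex.conj_ofReal _).symm
  refine hPc.posDef_iff_eigenvalues_pos.mpr fun i => ?_
  have hi : hPc.eigenvalues i ∈ spectrum ℝ P := AlgHom.spectrum_apply_subset
    Complex.ofRealAm.mapMatrix P (hPc.eigenvalues_mem_spectrum_real i)
  obtain ⟨j, hj⟩ := hP.isHermitian.spectrum_real_eq_range_eigenvalues ▸ hi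
  exact hj ▸ hP.eigenvalues_pos j

theorem Matrix.lyapunov_map_ofReal {M P : Matrix n n ℝ} {c : ℝ}
    (h : P * M + Mᵀ * P = c • 1) :
    P.map Complex.ofReal * M.map Complex.ofReal + (M.map Complex.ofReal)ᴴ * P.map Complex.ofReal
      = c • 1 := by
  have := congrArg Complex.ofRealAm.mapMatrix h
  rw [map_add, map_mul, map_mul, map_smul, map_one] at this
  rwa [← conjTranspose_eq_transpose_of_trivial, AlgHom.mapMatrix_apply, AlgHom.mapMatrix_apply,
    AlgHom.mapMatrix_apply, Complex.ofRealAm_coe,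
    conjTranspose_map _ fun _ => (Complex.conj_ofReal _).symm] at this

end

theorem le_maxEig {n : ℕ} (P : Matrix (Fin n) (Fin n) ℝ) {x : ℝ} (hx : x ∈ spectrum ℝ P) :
    x ≤ maxEig P :=
  le_csSup (Matrix.finite_spectrum P).bddAbove hx

theorem exists_re_eq_specAbscissa {n : ℕ} (hn : 0 < n) (M : Matrix (Fin n) (Fin n) ℝ) :
    ∃ z ∈ spectrum ℂ (M.map Complex.ofReal), z.re = specAbscissa M := by
  have : Nonempty (Fin n) := ⟨⟨0, hn⟩⟩
  have hne := spectrum.nonempty_of_isAlgClosed_of_finiteDimensional ℂ (M.map Complex.ofReal)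
  exact (hne.image _).csSup_mem ((Matrix.finite_spectrum _).image _)

theorem maxEig_mul_specAbscissa_le_general {n : ℕ} (hn : 0 < n)
    (M P : Matrix (Fin n) (Fin n) ℝ)
    (μ : ℝ) (hμ : 0 < μ) (hP : P.PosDef)
    (hLyap : P * M + Mᵀ * P = (-(2 * μ)) • (1 : Matrix (Fin n) (Fin n) ℝ)) :
    maxEig P * specAbscissa M ≤ -μ := by
  obtain ⟨z, hz, hre⟩ := exists_re_eq_specAbscissa hn M
  rw [← hre]
  exact hP.map_ofReal.mul_re_le_of_lyapunov hμ.le (lyapunov_map_ofReal hLyap)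
    (fun x hx => le_maxEig P (AlgHom.spectrum_apply_subset Complex.ofRealAm.mapMatrix P hx)) hz

/-- inequality (32) of the paper's Lemma 5: if `M` is Hurwitz,
`μ > 0` and `P` is the symmetric positive definite solution of
`P * M + Mᵀ * P = -(2μ) • 1`, then `λ_max(P) * α(M) ≤ -μ`. -/
theorem maxEig_mul_specAbscissa_le {n : ℕ} (hn : 0 < n)
    (M P : Matrix (Fin n) (Fin n) ℝ) (hM : IsHurwitz M)
    (μ : ℝ) (hμ : 0 < μ) (hP : P.PosDef)
    (hLyap : P * M + Mᵀ * P = (-(2 * μ)) • (1 : Matrix (Fin n) (Fin n) ℝ)) :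
    maxEig P * specAbscissa M ≤ -μ :=
  maxEig_mul_specAbscissa_le_general hn M P μ hμ hP hLyap
end

section
/- Let A, F be complex n×n matrices, let H be a complex N×N matrix, and let λ₁, …, λ_N be the eigenvalues of H. Then the Nn×Nn matrix M = I_N ⊗ A − H ⊗ F (Kronecker products) is Hurwitz if and only if A − λᵢ·F is Hurwitz for every i = 1, …, N. -/
open Matrix Kronecker

/-- A complex square matrix is Hurwitz if every one of its eigenvalues has
strictly negative real part. -/
def IsHurwitzC {m : Type*} [Fintype m] [DecidableEq m] (M : Matrix m m ℂ) : Prop :=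
  ∀ z ∈ spectrum ℂ M, z.re < 0

private lemma mem_spectrum_iff_det' {m : Type*} [Fintype m] [DecidableEq m]
    (M : Matrix m m ℂ) (z : ℂ) :
    z ∈ spectrum ℂ M ↔ (z • (1 : Matrix m m ℂ) - M).det = 0 := by
  rw [spectrum.mem_iff, Algebra.algebraMap_eq_smul_one, Matrix.isUnit_iff_isUnit_det,
    isUnit_iff_ne_zero, not_ne_iff]

private lemma mem_spectrum_iff_exists' {m : Type*} [Fintype m] [DecidableEq m]
    (M : Matrix m m ℂ) (z : ℂ) :
    z ∈ spectrum ℂ M ↔ ∃ v ≠ 0, (z • (1 : Matrix m m ℂ) - M) *ᵥ v = 0 := by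
  rw [mem_spectrum_iff_det', ← Matrix.exists_mulVec_eq_zero_iff]

private lemma kron_mulVec_prod' {N n : ℕ} (P : Matrix (Fin N) (Fin N) ℂ)
    (Q : Matrix (Fin n) (Fin n) ℂ) (v : Fin N → ℂ) (w : Fin n → ℂ) :
    (P ⊗ₖ Q) *ᵥ (fun p => v p.1 * w p.2) = fun p => (P *ᵥ v) p.1 * (Q *ᵥ w) p.2 := by
  funext p
  simp only [Matrix.mulVec, dotProduct, Fintype.sum_prod_type, kroneckerMap_apply,
    Finset.sum_mul_sum]
  exact Finset.sum_congr rfl fun j _ => Finset.sum_congr rfl fun b _ => by ring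

private lemma kron_one_mulVec' {N n : ℕ} (H : Matrix (Fin N) (Fin N) ℂ)
    (x : Fin N × Fin n → ℂ) (i : Fin N) (a : Fin n) :
    ((H ⊗ₖ (1 : Matrix (Fin n) (Fin n) ℂ)) *ᵥ x) (i, a) = ∑ j, H i j * x (j, a) := by
  simp [Matrix.mulVec, dotProduct, Fintype.sum_prod_type, Matrix.one_apply,
    ite_mul, mul_assoc]

private lemma shift_eq' {N n : ℕ} (A F : Matrix (Fin n) (Fin n) ℂ)
    (H : Matrix (Fin N) (Fin N) ℂ) (z : ℂ) :
    z • (1 : Matrix (Fin N × Fin n) (Fin N × Fin n) ℂ)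
        - ((1 : Matrix (Fin N) (Fin N) ℂ) ⊗ₖ A - H ⊗ₖ F)
      = (1 : Matrix (Fin N) (Fin N) ℂ) ⊗ₖ (z • (1 : Matrix (Fin n) (Fin n) ℂ) - A) + H ⊗ₖ F := by
  have h1 : (1 : Matrix (Fin N) (Fin N) ℂ) ⊗ₖ (z • (1 : Matrix (Fin n) (Fin n) ℂ) - A)
      + (1 : Matrix (Fin N) (Fin N) ℂ) ⊗ₖ A
      = (1 : Matrix (Fin N) (Fin N) ℂ) ⊗ₖ (z • (1 : Matrix (Fin n) (Fin n) ℂ)) := by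
    rw [← Matrix.kronecker_add, sub_add_cancel]
  have h2 : (1 : Matrix (Fin N) (Fin N) ℂ) ⊗ₖ (z • (1 : Matrix (Fin n) (Fin n) ℂ))
      = z • (1 : Matrix (Fin N × Fin n) (Fin N × Fin n) ℂ) := by
    rw [Matrix.kronecker_smul, Matrix.one_kronecker_one]
  rw [← h2, ← h1]; abel

/-- the paper's Lemma 2: `I_N ⊗ A - H ⊗ F` is Hurwitz if and
only if `A - λ • F` is Hurwitz for every eigenvalue `λ` of `H`. -/
theorem kronecker_hurwitz_iff {n N : ℕ}
    (A F : Matrix (Fin n) (Fin n) ℂ) (H : Matrix (Fin N) (Fin N) ℂ) :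
    IsHurwitzC ((1 : Matrix (Fin N) (Fin N) ℂ) ⊗ₖ A - H ⊗ₖ F) ↔
      ∀ lam ∈ spectrum ℂ H, IsHurwitzC (A - lam • F) := by
  set M := (1 : Matrix (Fin N) (Fin N) ℂ) ⊗ₖ A - H ⊗ₖ F with hMdef
  have hsmall : ∀ (lam z : ℂ), z • (1 : Matrix (Fin n) (Fin n) ℂ) - (A - lam • F)
      = (z • (1 : Matrix (Fin n) (Fin n) ℂ) - A) + lam • F := fun lam z => by abel
  -- Direction 1: each eigenvalue of `A - lam•F` is an eigenvalue of `M`.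
  have key1 : ∀ lam ∈ spectrum ℂ H, ∀ z ∈ spectrum ℂ (A - lam • F), z ∈ spectrum ℂ M := by
    intro lam hlam z hz
    obtain ⟨v, hv, hveq⟩ := (mem_spectrum_iff_exists' H lam).mp hlam
    obtain ⟨w, hw, hweq⟩ := (mem_spectrum_iff_exists' (A - lam • F) z).mp hz
    have hvH : H *ᵥ v = lam • v := by
      rw [Matrix.sub_mulVec, Matrix.smul_mulVec, Matrix.one_mulVec, sub_eq_zero] at hveq
      exact hveq.symm
    have hw0 : (z • (1 : Matrix (Fin n) (Fin n) ℂ) - A) *ᵥ w + lam • (F *ᵥ w) = 0 := by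
      rw [hsmall, Matrix.add_mulVec, Matrix.smul_mulVec] at hweq
      exact hweq
    rw [mem_spectrum_iff_exists']
    refine ⟨fun p => v p.1 * w p.2, ?_, ?_⟩
    · obtain ⟨i, hi⟩ := Function.ne_iff.mp hv
      obtain ⟨a, ha⟩ := Function.ne_iff.mp hw
      refine Function.ne_iff.mpr ⟨(i, a), ?_⟩
      simp only [Pi.zero_apply] at hi ha ⊢
      exact mul_ne_zero hi ha
    · rw [shift_eq', Matrix.add_mulVec, kron_mulVec_prod', kron_mulVec_prod']
      funext p
      have h2 := congrFun hw0 p.2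
      simp only [Pi.add_apply, Pi.smul_apply, Pi.zero_apply, smul_eq_mul] at h2
      simp only [Matrix.one_mulVec, hvH, Pi.add_apply, Pi.smul_apply, Pi.zero_apply, smul_eq_mul]
      linear_combination v p.1 * h2
  -- Direction 2: each eigenvalue of `M` is an eigenvalue of some `A - lam•F`.
  have key2 : ∀ z ∈ spectrum ℂ M, ∃ lam ∈ spectrum ℂ H, z ∈ spectrum ℂ (A - lam • F) := by
    intro z hz
    set B := z • (1 : Matrix (Fin n) (Fin n) ℂ) - A with hBdef
    set G := z • (1 : Matrix (Fin N × Fin n) (Fin N × Fin n) ℂ) - M with hGdef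
    have hGeq : G = (1 : Matrix (Fin N) (Fin N) ℂ) ⊗ₖ B + H ⊗ₖ F := shift_eq' A F H z
    have hcomm : G * (H ⊗ₖ (1 : Matrix (Fin n) (Fin n) ℂ))
        = (H ⊗ₖ (1 : Matrix (Fin n) (Fin n) ℂ)) * G := by
      rw [hGeq, add_mul, mul_add]
      simp only [← Matrix.mul_kronecker_mul, Matrix.one_mul, Matrix.mul_one]
    set K := LinearMap.ker G.mulVecLin with hKdef
    obtain ⟨x₀, hx₀, hx₀eq⟩ := (mem_spectrum_iff_exists' M z).mp hz
    have hx₀K : x₀ ∈ K := by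
      rw [hKdef, LinearMap.mem_ker, Matrix.mulVecLin_apply]; exact hx₀eq
    haveI : Nontrivial K := nontrivial_of_ne ⟨x₀, hx₀K⟩ 0
      (fun h => hx₀ ((Submodule.mk_eq_zero _ _).mp h))
    have hstab : ∀ x ∈ K, (H ⊗ₖ (1 : Matrix (Fin n) (Fin n) ℂ)).mulVecLin x ∈ K := by
      intro x hx
      rw [hKdef, LinearMap.mem_ker, Matrix.mulVecLin_apply] at hx ⊢
      rw [Matrix.mulVecLin_apply, Matrix.mulVec_mulVec, hcomm, ← Matrix.mulVec_mulVec, hx,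
        Matrix.mulVec_zero]
    obtain ⟨μ, hμ⟩ := Module.End.exists_eigenvalue
      ((H ⊗ₖ (1 : Matrix (Fin n) (Fin n) ℂ)).mulVecLin.restrict hstab)
    obtain ⟨y, hy⟩ := hμ.exists_hasEigenvector
    set x : Fin N × Fin n → ℂ := (y : Fin N × Fin n → ℂ) with hxdef
    have hx0 : x ≠ 0 := by
      simpa [hxdef, Submodule.coe_eq_zero] using hy.right
    have hxR : (H ⊗ₖ (1 : Matrix (Fin n) (Fin n) ℂ)) *ᵥ x = μ • x := by
      have h := congrArg (Subtype.val) hy.apply_eq_smul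
      rwa [LinearMap.restrict_coe_apply, Matrix.mulVecLin_apply, Submodule.coe_smul] at h
    have hxG : G *ᵥ x = 0 := by
      have h := LinearMap.mem_ker.mp y.2
      rwa [Matrix.mulVecLin_apply] at h
    obtain ⟨p₀, hp₀⟩ := Function.ne_iff.mp hx0
    simp only [Pi.zero_apply] at hp₀
    -- μ is an eigenvalue of H
    have hμH : μ ∈ spectrum ℂ H := by
      rw [mem_spectrum_iff_exists']
      refine ⟨fun j => x (j, p₀.2), ?_, ?_⟩
      · refine Function.ne_iff.mpr ⟨p₀.1, ?_⟩
        simpa only [Pi.zero_apply] using hp₀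
      · have hHv : H *ᵥ (fun j => x (j, p₀.2)) = μ • (fun j => x (j, p₀.2)) := by
          funext i
          have h1 := kron_one_mulVec' H x i p₀.2
          have h2 := congrFun hxR (i, p₀.2)
          simp only [Pi.smul_apply, smul_eq_mul] at h2
          calc (H *ᵥ fun j => x (j, p₀.2)) i = ∑ j, H i j * x (j, p₀.2) := rfl
            _ = ((H ⊗ₖ (1 : Matrix (Fin n) (Fin n) ℂ)) *ᵥ x) (i, p₀.2) := h1.symm
            _ = μ * x (i, p₀.2) := h2
            _ = (μ • fun j => x (j, p₀.2)) i := rfl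
        rw [Matrix.sub_mulVec, Matrix.smul_mulVec, Matrix.one_mulVec, hHv, sub_self]
    refine ⟨μ, hμH, ?_⟩
    -- z is an eigenvalue of A - μ•F
    have hkey : ((1 : Matrix (Fin N) (Fin N) ℂ) ⊗ₖ (B + μ • F)) *ᵥ x = 0 := by
      have h1 : (1 : Matrix (Fin N) (Fin N) ℂ) ⊗ₖ (B + μ • F)
          = (1 : Matrix (Fin N) (Fin N) ℂ) ⊗ₖ B + μ • ((1 : Matrix (Fin N) (Fin N) ℂ) ⊗ₖ F) := by
        rw [Matrix.kronecker_add, Matrix.kronecker_smul]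
      have h2 : (H ⊗ₖ F) *ᵥ x = μ • (((1 : Matrix (Fin N) (Fin N) ℂ) ⊗ₖ F) *ᵥ x) := by
        have hHF : H ⊗ₖ F = ((1 : Matrix (Fin N) (Fin N) ℂ) ⊗ₖ F)
            * (H ⊗ₖ (1 : Matrix (Fin n) (Fin n) ℂ)) := by
          rw [← Matrix.mul_kronecker_mul, Matrix.one_mul, Matrix.mul_one]
        rw [hHF, ← Matrix.mulVec_mulVec, hxR, Matrix.mulVec_smul]
      have h3 := hxG
      rw [hGeq, Matrix.add_mulVec, h2] at h3
      rw [h1, Matrix.add_mulVec, Matrix.smul_mulVec]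
      exact h3
    have hdet : (B + μ • F).det = 0 := by
      have hd : ((1 : Matrix (Fin N) (Fin N) ℂ) ⊗ₖ (B + μ • F)).det = 0 :=
        Matrix.exists_mulVec_eq_zero_iff.mp ⟨x, hx0, hkey⟩
      rw [Matrix.det_kronecker, Matrix.det_one, one_pow, one_mul] at hd
      have hN : (Fintype.card (Fin N)) ≠ 0 := by
        simpa using (p₀.1.pos).ne'
      exact (pow_eq_zero_iff hN).mp hd
    rw [mem_spectrum_iff_det', hsmall]
    exact hdet
  constructor
  · intro hM lam hlam z hz
    exact hM z (key1 lam hlam z hz)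
  · intro h z hz
    obtain ⟨lam, hlam, hz'⟩ := key2 z hz
    exact h lam hlam z hz'
end

section
/- Let A, F be complex n×n matrices and let H be a complex N×N matrix. Then the spectrum of the Nn×Nn matrix I_N ⊗ A − H ⊗ F equals the union, over all eigenvalues λ of H, of the spectra of the matrices A − λ·F. -/
/-!
For an eigenvector `v` of `H` (eigenvalue `λ`) and an eigenvector `x` of `A - λ • F`
(eigenvalue `μ`), the tensor `v ⊗ x` is an eigenvector of `M = 1 ⊗ A - H ⊗ F` with eigenvalue `μ`.

Conversely, `H ⊗ 1` commutes with `M`, so over an algebraically closed field the `μ`-eigenspace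
of `M` contains an eigenvector `w` of `H ⊗ 1`, say with eigenvalue `λ ∈ σ(H)`. Since
`H ⊗ F = (1 ⊗ F)(H ⊗ 1)`, on `w` the matrix `M` acts as `1 ⊗ (A - λ • F)`, whose spectrum is
contained in that of `A - λ • F`.
-/

open Matrix Kronecker Module End

theorem Module.End.exists_hasEigenvector_of_commute {K V : Type*} [Field K] [IsAlgClosed K]
    [AddCommGroup V] [Module K V] [FiniteDimensional K V] {f g : End K V} (hfg : Commute f g)
    {μ : K} (hμ : g.HasEigenvalue μ) :
    ∃ lam v, f.HasEigenvector lam v ∧ g.HasEigenvector μ v := by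
  have hmaps : Set.MapsTo f (g.eigenspace μ) (g.eigenspace μ) :=
    mapsTo_genEigenspace_of_comm hfg.symm μ 1
  have : Nontrivial (g.eigenspace μ) := Submodule.nontrivial_iff_ne_bot.mpr hμ
  obtain ⟨lam, hlam⟩ := exists_eigenvalue (f.restrict hmaps)
  obtain ⟨w, hw⟩ := hlam.exists_hasEigenvector
  have hw0 : (w : V) ≠ 0 := by simpa using hw.2
  exact ⟨lam, w, ⟨mem_eigenspace_iff.mpr (congrArg Subtype.val hw.apply_eq_smul), hw0⟩, w.2, hw0⟩

theorem Commute.kronecker {R m n : Type*} [CommSemiring R] [Fintype m] [Fintype n]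
    {P P' : Matrix m m R} {Q Q' : Matrix n n R} (hP : Commute P P') (hQ : Commute Q Q') :
    Commute (P ⊗ₖ Q) (P' ⊗ₖ Q') := by
  rw [Commute, SemiconjBy, ← mul_kronecker_mul, ← mul_kronecker_mul, hP.eq, hQ.eq]

namespace Matrix

theorem kronecker_sub {α l m n p : Type*} [NonUnitalNonAssocRing α] (A : Matrix l m α)
    (B₁ B₂ : Matrix n p α) : A ⊗ₖ (B₁ - B₂) = A ⊗ₖ B₁ - A ⊗ₖ B₂ := by
  rw [eq_sub_iff_add_eq, ← kronecker_add, sub_add_cancel]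

theorem sub_kronecker {α l m n p : Type*} [NonUnitalNonAssocRing α] (A₁ A₂ : Matrix l m α)
    (B : Matrix n p α) : (A₁ - A₂) ⊗ₖ B = A₁ ⊗ₖ B - A₂ ⊗ₖ B := by
  rw [eq_sub_iff_add_eq, ← add_kronecker, sub_add_cancel]

theorem kronecker_mulVec_vec_vecMulVec {R m m' n n' : Type*} [CommSemiring R] [Fintype m']
    [Fintype n'] (P : Matrix m m' R) (Q : Matrix n n' R) (x : n' → R) (v : m' → R) :
    (P ⊗ₖ Q) *ᵥ vec (vecMulVec x v) = vec (vecMulVec (Q *ᵥ x) (P *ᵥ v)) := by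
  rw [kronecker_mulVec_vec, mul_vecMulVec, vecMulVec_mul, vecMul_transpose]

section CommRing

variable {R m n : Type*} [CommRing R] [Fintype m] [DecidableEq m] [Fintype n] [DecidableEq n]

theorem spectrum_one_kronecker_subset (Q : Matrix n n R) :
    spectrum R ((1 : Matrix m m R) ⊗ₖ Q) ⊆ spectrum R Q := by
  intro μ
  rw [spectrum.mem_iff, spectrum.mem_iff, not_imp_not, Algebra.algebraMap_eq_smul_one,
    Algebra.algebraMap_eq_smul_one]
  intro hQ
  have hsplit : (1 : Matrix m m R) ⊗ₖ (μ • 1 - Q) = μ • 1 - 1 ⊗ₖ Q := by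
    rw [kronecker_sub, kronecker_smul, one_kronecker_one]
  rw [← hsplit, isUnit_iff_isUnit_det, det_kronecker, det_one, one_pow, one_mul]
  exact ((isUnit_iff_isUnit_det _).mp hQ).pow _

theorem spectrum_kronecker_one_subset (P : Matrix m m R) :
    spectrum R (P ⊗ₖ (1 : Matrix n n R)) ⊆ spectrum R P := by
  intro μ
  rw [spectrum.mem_iff, spectrum.mem_iff, not_imp_not, Algebra.algebraMap_eq_smul_one,
    Algebra.algebraMap_eq_smul_one]
  intro hP
  have hsplit : (μ • 1 - P) ⊗ₖ (1 : Matrix n n R) = μ • 1 - P ⊗ₖ 1 := by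
    rw [sub_kronecker, smul_kronecker, one_kronecker_one]
  rw [← hsplit, isUnit_iff_isUnit_det, det_kronecker, det_one, one_pow, mul_one]
  exact ((isUnit_iff_isUnit_det _).mp hP).pow _

end CommRing

section Field

variable {K ι κ : Type*} [Field K] [Fintype ι] [DecidableEq ι] [Fintype κ] [DecidableEq κ]

theorem mem_spectrum_iff_exists_mulVec_eq_smul {M : Matrix ι ι K} {μ : K} :
    μ ∈ spectrum K M ↔ ∃ v ≠ 0, M *ᵥ v = μ • v := by
  simp_rw [← spectrum_toLin', ← hasEigenvalue_iff_mem_spectrum, hasEigenvalue_iff,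
    Submodule.ne_bot_iff, mem_eigenspace_iff, toLin'_apply, and_comm]

theorem exists_mulVec_eq_smul_of_commute [IsAlgClosed K] {P Q : Matrix ι ι K}
    (h : Commute P Q) {μ : K} (hμ : μ ∈ spectrum K Q) :
    ∃ lam : K, ∃ v ≠ 0, P *ᵥ v = lam • v ∧ Q *ᵥ v = μ • v := by
  rw [← spectrum_toLin', ← hasEigenvalue_iff_mem_spectrum] at hμ
  obtain ⟨lam, v, hP, hQ⟩ := exists_hasEigenvector_of_commute (h.map toLinAlgEquiv') hμ
  exact ⟨lam, v, hP.2, by simpa using hP.apply_eq_smul, by simpa using hQ.apply_eq_smul⟩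

theorem mem_spectrum_one_kronecker_sub_kronecker {H : Matrix ι ι K} {A F : Matrix κ κ K}
    {lam μ : K} (hlam : lam ∈ spectrum K H) (hμ : μ ∈ spectrum K (A - lam • F)) :
    μ ∈ spectrum K (1 ⊗ₖ A - H ⊗ₖ F) := by
  obtain ⟨v, hv0, hv⟩ := mem_spectrum_iff_exists_mulVec_eq_smul.mp hlam
  obtain ⟨x, hx0, hx⟩ := mem_spectrum_iff_exists_mulVec_eq_smul.mp hμ
  rw [sub_mulVec, smul_mulVec] at hx
  refine mem_spectrum_iff_exists_mulVec_eq_smul.mpr ⟨vec (vecMulVec x v), ?_, ?_⟩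
  · obtain ⟨i, hi⟩ := Function.ne_iff.mp hx0
    obtain ⟨j, hj⟩ := Function.ne_iff.mp hv0
    exact Function.ne_iff.mpr ⟨(j, i), mul_ne_zero hi hj⟩
  · rw [sub_mulVec, kronecker_mulVec_vec_vecMulVec, kronecker_mulVec_vec_vecMulVec, one_mulVec,
      hv, ← vec_sub, ← vec_smul, vecMulVec_smul, ← smul_vecMulVec, ← sub_vecMulVec, hx,
      smul_vecMulVec]

theorem exists_mem_spectrum_of_mem_spectrum_one_kronecker_sub_kronecker [IsAlgClosed K]
    {H : Matrix ι ι K} {A F : Matrix κ κ K} {μ : K} (hμ : μ ∈ spectrum K (1 ⊗ₖ A - H ⊗ₖ F)) :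
    ∃ lam ∈ spectrum K H, μ ∈ spectrum K (A - lam • F) := by
  have hcomm : Commute (H ⊗ₖ (1 : Matrix κ κ K)) (1 ⊗ₖ A - H ⊗ₖ F) :=
    ((Commute.one_right H).kronecker (Commute.one_left A)).sub_right
      ((Commute.refl H).kronecker (Commute.one_left F))
  obtain ⟨lam, w, hw0, hHw, hMw⟩ := exists_mulVec_eq_smul_of_commute hcomm hμ
  have hHF : H ⊗ₖ F = (1 ⊗ₖ F) * (H ⊗ₖ (1 : Matrix κ κ K)) := by
    rw [← mul_kronecker_mul, Matrix.one_mul, Matrix.mul_one]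
  have hw : ((1 : Matrix ι ι K) ⊗ₖ (A - lam • F)) *ᵥ w = μ • w :=
    calc ((1 : Matrix ι ι K) ⊗ₖ (A - lam • F)) *ᵥ w
        = (1 ⊗ₖ A) *ᵥ w - lam • ((1 ⊗ₖ F) *ᵥ w) := by
          rw [kronecker_sub, kronecker_smul, sub_mulVec, smul_mulVec]
      _ = (1 ⊗ₖ A - H ⊗ₖ F) *ᵥ w := by rw [sub_mulVec, hHF, ← mulVec_mulVec, hHw, mulVec_smul]
      _ = μ • w := hMw
  exact ⟨lam,
    spectrum_kronecker_one_subset H (mem_spectrum_iff_exists_mulVec_eq_smul.mpr ⟨w, hw0, hHw⟩),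
    spectrum_one_kronecker_subset _ (mem_spectrum_iff_exists_mulVec_eq_smul.mpr ⟨w, hw0, hw⟩)⟩

theorem spectrum_one_kronecker_sub_kronecker [IsAlgClosed K] (H : Matrix ι ι K)
    (A F : Matrix κ κ K) :
    spectrum K (1 ⊗ₖ A - H ⊗ₖ F) = ⋃ lam ∈ spectrum K H, spectrum K (A - lam • F) := by
  ext μ
  simp only [Set.mem_iUnion, exists_prop]
  exact ⟨exists_mem_spectrum_of_mem_spectrum_one_kronecker_sub_kronecker,
    fun ⟨_, hlam, hμ⟩ => mem_spectrum_one_kronecker_sub_kronecker hlam hμ⟩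

end Field

end Matrix

/-- spectral decomposition behind the paper's Lemma 2:
the spectrum of `I_N ⊗ A - H ⊗ F` is the union, over the eigenvalues `λ` of
`H`, of the spectra of the matrices `A - λ • F`. -/
theorem spectrum_kronecker_eq_union {n N : ℕ}
    (A F : Matrix (Fin n) (Fin n) ℂ) (H : Matrix (Fin N) (Fin N) ℂ) :
    spectrum ℂ ((1 : Matrix (Fin N) (Fin N) ℂ) ⊗ₖ A - H ⊗ₖ F) =
      ⋃ lam ∈ spectrum ℂ H, spectrum ℂ (A - lam • F) :=
  spectrum_one_kronecker_sub_kronecker H A F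
end

section
/- Let A be a real n×n matrix, let Q and R be symmetric positive definite real n×n matrices, and suppose P is a symmetric positive definite real n×n matrix solving the algebraic Riccati equation A·P + P·Aᵀ + Q − P·R⁻¹·P = 0. Set F = P·R⁻¹. Then for every complex number s with Re(s) ≥ 1/2, the complex matrix A − s·F is Hurwitz (all of its eigenvalues have strictly negative real part). -/
/-!
If `wᴴ M = z wᴴ`, the Lyapunov form `wᴴ (M P + P Mᴴ) w` equals `2 Re z · wᴴ P w`, so a positive
definite `P` with `M P + P Mᴴ` negative definite forces `Re z < 0`. For `M = A - s F` with
`F = P R⁻¹`, the Riccati equation gives `M P + P Mᴴ = -Q + (1 - 2 Re s) P R⁻¹ P`, which is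
negative definite as soon as `Re s ≥ 1/2`.
-/

open Matrix

open Complex
open scoped ComplexOrder

theorem Matrix.exists_vecMul_eq_smul_of_mem_spectrum {K n : Type*} [Field K] [Fintype n]
    [DecidableEq n] {M : Matrix n n K} {z : K} (hz : z ∈ spectrum K M) :
    ∃ v ≠ 0, v ᵥ* M = z • v := by
  rw [mem_spectrum_iff_isRoot_charpoly, Polynomial.IsRoot.def, eval_charpoly,
    ← exists_vecMul_eq_zero_iff] at hz
  obtain ⟨v, hv0, hv⟩ := hz
  refine ⟨v, hv0, ?_⟩
  rw [vecMul_sub, sub_eq_zero, scalar_apply, ← smul_one_eq_diagonal, vecMul_smul,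
    vecMul_one] at hv
  exact hv.symm

open scoped MatrixOrder in
theorem Matrix.PosDef.map_algebraMap {𝕜 n : Type*} [RCLike 𝕜] [Fintype n] [DecidableEq n]
    {P : Matrix n n ℝ} (hP : P.PosDef) : (P.map (algebraMap ℝ 𝕜)).PosDef := by
  have hsemi : (P.map (algebraMap ℝ 𝕜)).PosSemidef := by
    obtain ⟨B, hB⟩ := CStarAlgebra.nonneg_iff_eq_star_mul_self.mp hP.posSemidef.nonneg
    rw [hB, star_eq_conjTranspose, ← RingHom.mapMatrix_apply, map_mul, RingHom.mapMatrix_apply,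
      conjTranspose_map _ fun _ => (RCLike.conj_ofReal _).symm]
    exact posSemidef_conjTranspose_mul_self _
  rw [hsemi.posDef_iff_det_ne_zero, ← RingHom.mapMatrix_apply, ← RingHom.map_det]
  exact (map_ne_zero _).mpr hP.det_pos.ne'

theorem IsHurwitzC.of_lyapunov {m : Type*} [Fintype m] [DecidableEq m] {M P : Matrix m m ℂ}
    (hP : P.PosDef) (hL : (-(M * P + P * Mᴴ)).PosDef) : IsHurwitzC M := by
  intro z hz
  obtain ⟨v, hv0, hv⟩ := exists_vecMul_eq_smul_of_mem_spectrum hz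
  have hx : star v ≠ 0 := star_ne_zero.mpr hv0
  have hMx : Mᴴ *ᵥ star v = star z • star v := by rw [← star_vecMul, hv, star_smul]
  have hquad : star (star v) ⬝ᵥ (M * P + P * Mᴴ) *ᵥ star v
      = (2 * z.re : ℝ) * (star (star v) ⬝ᵥ P *ᵥ star v) := by
    rw [star_star, add_mulVec, dotProduct_add, ← mulVec_mulVec, ← mulVec_mulVec, hMx,
      dotProduct_mulVec v M, hv, mulVec_smul, dotProduct_smul, smul_dotProduct, ← add_conj]
    simp only [smul_eq_mul, add_mul, star_def]
  have hPpos := (pos_iff.mp (hP.dotProduct_mulVec_pos hx)).1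
  have hLpos := (pos_iff.mp (hL.dotProduct_mulVec_pos hx)).1
  rw [neg_mulVec, dotProduct_neg, hquad, neg_re, re_ofReal_mul] at hLpos
  nlinarith

theorem Matrix.map_ofReal_mul {n : Type*} [Fintype n] (X Y : Matrix n n ℝ) :
    (X * Y).map ofReal = X.map ofReal * Y.map ofReal :=
  Matrix.map_mul (f := ofRealHom)

theorem Matrix.conjTranspose_map_ofReal {n : Type*} (X : Matrix n n ℝ) :
    (X.map ofReal)ᴴ = Xᵀ.map ofReal := by
  rw [← conjTranspose_eq_transpose_of_trivial, conjTranspose_map _ fun _ => (conj_ofReal _).symm]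

theorem neg_lyapunov_eq_of_riccati {n : Type*} [Fintype n] [DecidableEq n]
    {A Q R P : Matrix n n ℝ} (hR : R.IsHermitian) (hP : P.IsHermitian)
    (hRic : A * P + P * Aᵀ + Q - P * R⁻¹ * P = 0) (s : ℂ) :
    -((A.map ofReal - s • (P * R⁻¹).map ofReal) * P.map ofReal
        + P.map ofReal * (A.map ofReal - s • (P * R⁻¹).map ofReal)ᴴ)
      = (Q + (2 * s.re - 1) • (P * R⁻¹ * P)).map ofReal := by
  have hAP : A * P + P * Aᵀ = P * R⁻¹ * P - Q := by
    rw [← sub_eq_zero, ← hRic]; abel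
  have hFt : (P * R⁻¹)ᵀ = R⁻¹ * P := by
    rw [transpose_mul, ← conjTranspose_eq_transpose_of_trivial, hR.inv.eq,
      ← conjTranspose_eq_transpose_of_trivial, hP.eq]
  rw [conjTranspose_sub, conjTranspose_smul, conjTranspose_map_ofReal, conjTranspose_map_ofReal,
    hFt, sub_mul, mul_sub, smul_mul_assoc, mul_smul_comm, ← map_ofReal_mul, ← map_ofReal_mul,
    ← map_ofReal_mul, ← map_ofReal_mul, ← mul_assoc P, sub_add_sub_comm,
    ← Matrix.map_add _ ofReal_add, hAP, ← add_smul, star_def, add_conj]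
  ext i j
  simp only [Matrix.neg_apply, Matrix.sub_apply, Matrix.smul_apply, map_apply, Matrix.add_apply,
    smul_eq_mul]
  push_cast
  ring

/-- key technical content of the paper's Lemma 3: if `P` is a
symmetric positive definite solution of the algebraic Riccati equation
`A * P + P * Aᵀ + Q - P * R⁻¹ * P = 0` with `Q, R` symmetric positive definite,
and `F = P * R⁻¹`, then for every complex `s` with `Re s ≥ 1/2` the matrix
`A - s • F` is Hurwitz. -/
theorem riccati_gain_hurwitz {n : ℕ} (A Q R P : Matrix (Fin n) (Fin n) ℝ)
    (hQ : Q.PosDef) (hR : R.PosDef) (hP : P.PosDef)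
    (hRic : A * P + P * Aᵀ + Q - P * R⁻¹ * P = 0) :
    ∀ s : ℂ, (1 : ℝ) / 2 ≤ s.re →
      IsHurwitzC (A.map Complex.ofReal - s • ((P * R⁻¹).map Complex.ofReal)) := by
  intro s hs
  refine IsHurwitzC.of_lyapunov (P := P.map ofReal) hP.map_algebraMap ?_
  rw [neg_lyapunov_eq_of_riccati hR.isHermitian hP.isHermitian hRic s]
  have hPRP : (P * R⁻¹ * P).PosSemidef := by
    simpa only [hP.isHermitian.eq] using hR.inv.posSemidef.conjTranspose_mul_mul_same P
  exact (hQ.add_posSemidef (hPRP.smul (by linarith))).map_algebraMap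
end

section
/- Let M be a real m×m Hurwitz matrix, let μ > 0, and let P be the symmetric positive definite solution of P·M + Mᵀ·P = −2μ·I_m. Let κ be a real constant with 0 ≤ κ < 2μ, and let e : [0,∞) → ℝ^m be a differentiable function satisfying e′(t) = M·e(t) + g(t) for all t ≥ 0, where g : [0,∞) → ℝ^m satisfies ⟨e(t), P·g(t)⟩ ≤ (κ/2)·‖e(t)‖² for all t ≥ 0. Then the Lyapunov function V(t) = ⟨e(t), P·e(t)⟩ satisfies V(t) ≤ exp( ((κ − 2μ)/λ_max(P)) · t ) · V(0) for all t ≥ 0; in particular e(t) → 0 exponentially as t → ∞. -/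
open Matrix

/-!
Along the error dynamics, the Lyapunov equation turns the derivative of `V = ⟨e, P e⟩` into
`V' = -2μ ‖e‖² + 2 ⟨e, P g⟩ ≤ (κ - 2μ) ‖e‖²`, and the Rayleigh bound `V ≤ λ_max(P) ‖e‖²` turns
this into the linear differential inequality `V' ≤ ((κ - 2μ) / λ_max(P)) V`, so Grönwall's
inequality gives the exponential bound. Positive definiteness of `P` bounds `‖e‖²` by a multiple
of `V`, so `e → 0`.
-/

open Filter Topology

theorem le_exp_mul_mul_of_hasDerivAt_le {V V' : ℝ → ℝ} {c : ℝ}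
    (hV : ∀ t ≥ (0 : ℝ), HasDerivAt V (V' t) t) (hV' : ∀ t ≥ (0 : ℝ), V' t ≤ c * V t) :
    ∀ t ≥ (0 : ℝ), V t ≤ Real.exp (c * t) * V 0 := by
  intro t ht
  have := le_gronwallBound_of_liminf_deriv_right_le (f := V) (δ := V 0) (ε := 0) (b := t)
    (fun s hs => (hV s hs.1).continuousAt.continuousWithinAt)
    (fun s hs r hr => (hV s hs.1).hasDerivWithinAt.liminf_right_slope_le hr) le_rfl
    (fun s hs => by simpa using hV' s hs.1) t ⟨ht, le_rfl⟩
  simpa [gronwallBound_ε0, mul_comm] using this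

theorem HasDerivAt.dotProduct {𝕜 n : Type*} [NontriviallyNormedField 𝕜] [Fintype n]
    {f g : 𝕜 → n → 𝕜} {f' g' : n → 𝕜} {t : 𝕜}
    (hf : HasDerivAt f f' t) (hg : HasDerivAt g g' t) :
    HasDerivAt (fun s => f s ⬝ᵥ g s) (f' ⬝ᵥ g t + f t ⬝ᵥ g') t := by
  unfold _root_.dotProduct
  rw [← Finset.sum_add_distrib]
  exact HasDerivAt.fun_sum fun i _ => (hasDerivAt_pi.1 hf i).mul (hasDerivAt_pi.1 hg i)

theorem HasDerivAt.matrix_mulVec {𝕜 n : Type*} [NontriviallyNormedField 𝕜] [Fintype n]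
    (A : Matrix n n 𝕜) {f : 𝕜 → n → 𝕜} {f' : n → 𝕜} {t : 𝕜} (hf : HasDerivAt f f' t) :
    HasDerivAt (fun s => A *ᵥ f s) (A *ᵥ f') t :=
  hasDerivAt_pi.2 fun i =>
    HasDerivAt.fun_sum fun j _ => (hasDerivAt_pi.1 hf j).const_mul (A i j)

namespace Matrix

lemma star_eq_transpose_of_trivial {α n : Type*} [Star α] [TrivialStar α] (A : Matrix n n α) :
    star A = Aᵀ := by
  rw [star_eq_conjTranspose, conjTranspose_eq_transpose_of_trivial]

variable {n : Type*} [Fintype n]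

lemma IsSymm.dotProduct_mulVec_comm {R : Type*} [CommSemiring R] {P : Matrix n n R}
    (hP : P.IsSymm) (v w : n → R) : v ⬝ᵥ P *ᵥ w = w ⬝ᵥ P *ᵥ v := by
  rw [dotProduct_mulVec, ← mulVec_transpose, hP.eq, dotProduct_comm]

lemma IsSymm.two_mul_dotProduct_mulVec_mulVec {R : Type*} [CommSemiring R] {P : Matrix n n R}
    (hP : P.IsSymm) (M : Matrix n n R) (x : n → R) :
    2 * (x ⬝ᵥ P *ᵥ M *ᵥ x) = x ⬝ᵥ (P * M + Mᵀ * P) *ᵥ x := by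
  rw [add_mulVec, dotProduct_add, ← mulVec_mulVec, ← mulVec_mulVec, dotProduct_mulVec x Mᵀ,
    ← mulVec_transpose, transpose_transpose, hP.dotProduct_mulVec_comm (M *ᵥ x), two_mul]

lemma IsSymm.hasDerivAt_dotProduct_mulVec_self {P : Matrix n n ℝ} (hP : P.IsSymm)
    {e : ℝ → n → ℝ} {e' : n → ℝ} {t : ℝ} (he : HasDerivAt e e' t) :
    HasDerivAt (fun s => e s ⬝ᵥ P *ᵥ e s) (2 * (e t ⬝ᵥ P *ᵥ e')) t := by
  refine (he.dotProduct (he.matrix_mulVec P)).congr_deriv ?_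
  rw [hP.dotProduct_mulVec_comm e', two_mul]

lemma norm_le_sqrt_dotProduct_self (x : n → ℝ) : ‖x‖ ≤ √(x ⬝ᵥ x) := by
  refine (pi_norm_le_iff_of_nonneg (Real.sqrt_nonneg _)).2 fun i => ?_
  rw [Real.norm_eq_abs]
  refine Real.abs_le_sqrt ?_
  simpa [dotProduct, sq] using
    Finset.single_le_sum (fun j _ => mul_self_nonneg (x j)) (Finset.mem_univ i)

variable [DecidableEq n]

lemma IsSymm.two_mul_dotProduct_mulVec_add_le {P M : Matrix n n ℝ} {μ κ : ℝ} (hP : P.IsSymm)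
    (hLyap : P * M + Mᵀ * P = (-(2 * μ)) • (1 : Matrix n n ℝ)) {x y : n → ℝ}
    (hxy : x ⬝ᵥ P *ᵥ y ≤ κ / 2 * (x ⬝ᵥ x)) :
    2 * (x ⬝ᵥ P *ᵥ (M *ᵥ x + y)) ≤ (κ - 2 * μ) * (x ⬝ᵥ x) := by
  have hMx : 2 * (x ⬝ᵥ P *ᵥ M *ᵥ x) = -(2 * μ) * (x ⬝ᵥ x) := by
    rw [hP.two_mul_dotProduct_mulVec_mulVec, hLyap, smul_mulVec, one_mulVec, dotProduct_smul,
      smul_eq_mul]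
  rw [mulVec_add, dotProduct_add, mul_add, hMx]
  linarith

lemma dotProduct_self_star_mulVec_of_mem_unitaryGroup {U : Matrix n n ℝ}
    (hU : U ∈ unitaryGroup n ℝ) (x : n → ℝ) : (star U *ᵥ x) ⬝ᵥ (star U *ᵥ x) = x ⬝ᵥ x := by
  rw [dotProduct_mulVec, ← mulVec_transpose, mulVec_mulVec, star_eq_transpose_of_trivial,
    transpose_transpose, ← star_eq_transpose_of_trivial, Unitary.mul_star_self_of_mem hU,
    one_mulVec]

variable {P : Matrix n n ℝ}

lemma IsHermitian.dotProduct_mulVec_eq_sum (hP : P.IsHermitian) (x : n → ℝ) :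
    x ⬝ᵥ P *ᵥ x =
      ∑ i, hP.eigenvalues i * (star (hP.eigenvectorUnitary : Matrix n n ℝ) *ᵥ x) i ^ 2 := by
  conv_lhs => rw [hP.spectral_theorem, Unitary.conjStarAlgAut_apply]
  rw [← mulVec_mulVec, ← mulVec_mulVec, dotProduct_mulVec, ← mulVec_transpose,
    ← star_eq_transpose_of_trivial]
  simp [dotProduct, mulVec_diagonal, sq, mul_left_comm]

lemma IsHermitian.dotProduct_self_eq_sum (hP : P.IsHermitian) (x : n → ℝ) :
    x ⬝ᵥ x = ∑ i, (star (hP.eigenvectorUnitary : Matrix n n ℝ) *ᵥ x) i ^ 2 := by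
  rw [← dotProduct_self_star_mulVec_of_mem_unitaryGroup hP.eigenvectorUnitary.2]
  simp [dotProduct, sq]

lemma IsHermitian.dotProduct_mulVec_le_s10 {c : ℝ} (hP : P.IsHermitian)
    (hc : ∀ i, hP.eigenvalues i ≤ c) (x : n → ℝ) : x ⬝ᵥ P *ᵥ x ≤ c * (x ⬝ᵥ x) := by
  rw [hP.dotProduct_mulVec_eq_sum, hP.dotProduct_self_eq_sum, Finset.mul_sum]
  gcongr with i
  exact hc i

lemma IsHermitian.le_dotProduct_mulVec {c : ℝ} (hP : P.IsHermitian)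
    (hc : ∀ i, c ≤ hP.eigenvalues i) (x : n → ℝ) : c * (x ⬝ᵥ x) ≤ x ⬝ᵥ P *ᵥ x := by
  rw [hP.dotProduct_mulVec_eq_sum, hP.dotProduct_self_eq_sum, Finset.mul_sum]
  gcongr with i
  exact hc i

lemma PosDef.exists_pos_mul_dotProduct_self_le (hP : P.PosDef) :
    ∃ c > 0, ∀ x : n → ℝ, c * (x ⬝ᵥ x) ≤ x ⬝ᵥ P *ᵥ x := by
  rcases isEmpty_or_nonempty n with hn | hn
  · exact ⟨1, one_pos, fun x => by simp [Subsingleton.elim x 0]⟩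
  · obtain ⟨i₀, hi₀⟩ := Finite.exists_min hP.isHermitian.eigenvalues
    exact ⟨_, hP.eigenvalues_pos i₀, hP.isHermitian.le_dotProduct_mulVec hi₀⟩

lemma PosDef.tendsto_zero_of_tendsto_dotProduct_mulVec {ι : Type*} {l : Filter ι}
    (hP : P.PosDef) {e : ι → n → ℝ} (h : Tendsto (fun t => e t ⬝ᵥ P *ᵥ e t) l (𝓝 0)) :
    Tendsto e l (𝓝 0) := by
  obtain ⟨c, hc, hle⟩ := hP.exists_pos_mul_dotProduct_self_le
  have hsq : Tendsto (fun t => e t ⬝ᵥ e t) l (𝓝 0) :=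
    squeeze_zero (fun t => by simpa using dotProduct_self_star_nonneg (e t))
      (fun t => (le_div_iff₀' hc).2 (hle (e t))) (by simpa using h.div_const c)
  exact squeeze_zero_norm (fun t => norm_le_sqrt_dotProduct_self (e t)) (by simpa using hsq.sqrt)

end Matrix

namespace Matrix

variable {m : ℕ} {P : Matrix (Fin m) (Fin m) ℝ}

lemma IsHermitian.eigenvalues_le_maxEig (hP : P.IsHermitian) (i : Fin m) :
    hP.eigenvalues i ≤ maxEig P :=
  le_csSup (finite_real_spectrum (A := P)).bddAbove (hP.eigenvalues_mem_spectrum_real i)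

lemma IsHermitian.dotProduct_mulVec_le_maxEig (hP : P.IsHermitian) (x : Fin m → ℝ) :
    x ⬝ᵥ P *ᵥ x ≤ maxEig P * (x ⬝ᵥ x) :=
  hP.dotProduct_mulVec_le_s10 hP.eigenvalues_le_maxEig x

lemma PosDef.maxEig_pos [Nonempty (Fin m)] (hP : P.PosDef) : 0 < maxEig P :=
  (hP.eigenvalues_pos (Classical.arbitrary _)).trans_le (hP.isHermitian.eigenvalues_le_maxEig _)

end Matrix

theorem lyapunov_exponential_decay_general {m : ℕ}
    (M P : Matrix (Fin m) (Fin m) ℝ)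
    (μ : ℝ) (hP : P.PosDef)
    (hLyap : P * M + Mᵀ * P = (-(2 * μ)) • (1 : Matrix (Fin m) (Fin m) ℝ))
    (κ : ℝ) (hκ : κ < 2 * μ)
    (e g : ℝ → (Fin m → ℝ))
    (he : ∀ t ≥ (0 : ℝ), HasDerivAt e (M.mulVec (e t) + g t) t)
    (hg : ∀ t ≥ (0 : ℝ), e t ⬝ᵥ P.mulVec (g t) ≤ (κ / 2) * (e t ⬝ᵥ e t)) :
    (∀ t ≥ (0 : ℝ), e t ⬝ᵥ P.mulVec (e t) ≤
        Real.exp ((κ - 2 * μ) / maxEig P * t) * (e 0 ⬝ᵥ P.mulVec (e 0))) ∧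
    Filter.Tendsto e Filter.atTop (nhds 0) := by
  -- For `m = 0` the rate degenerates: `maxEig P = sSup ∅ = 0`.
  rcases isEmpty_or_nonempty (Fin m) with hm | hm
  · have he0 (t : ℝ) : e t = 0 := Subsingleton.elim _ _
    exact ⟨fun t _ => by simp [he0], tendsto_const_nhds.congr fun t => (he0 t).symm⟩
  have hPsymm : P.IsSymm := isHermitian_iff_isSymm.1 hP.isHermitian
  set c := (κ - 2 * μ) / maxEig P
  have hc : c < 0 := div_neg_of_neg_of_pos (by linarith) hP.maxEig_pos
  have hV_deriv_le (t : ℝ) (ht : 0 ≤ t) :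
      2 * (e t ⬝ᵥ P *ᵥ (M *ᵥ e t + g t)) ≤ c * (e t ⬝ᵥ P *ᵥ e t) :=
    calc 2 * (e t ⬝ᵥ P *ᵥ (M *ᵥ e t + g t)) ≤ (κ - 2 * μ) * (e t ⬝ᵥ e t) :=
          hPsymm.two_mul_dotProduct_mulVec_add_le hLyap (hg t ht)
      _ = c * (maxEig P * (e t ⬝ᵥ e t)) := by
          rw [← mul_assoc, div_mul_cancel₀ _ hP.maxEig_pos.ne']
      _ ≤ c * (e t ⬝ᵥ P *ᵥ e t) :=
          mul_le_mul_of_nonpos_left (hP.isHermitian.dotProduct_mulVec_le_maxEig _) hc.le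
  have hdecay := le_exp_mul_mul_of_hasDerivAt_le
    (fun t ht => hPsymm.hasDerivAt_dotProduct_mulVec_self (he t ht)) hV_deriv_le
  refine ⟨hdecay, hP.tendsto_zero_of_tendsto_dotProduct_mulVec ?_⟩
  have hexp : Tendsto (fun t => Real.exp (c * t) * (e 0 ⬝ᵥ P *ᵥ e 0)) atTop (𝓝 0) := by
    simpa using (Real.tendsto_exp_atBot.comp (tendsto_id.const_mul_atTop_of_neg hc)).mul_const _
  have hV_nonneg (t : ℝ) : 0 ≤ e t ⬝ᵥ P *ᵥ e t := by
    simpa using hP.posSemidef.dotProduct_mulVec_nonneg (e t)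
  exact squeeze_zero' (.of_forall hV_nonneg) ((eventually_ge_atTop 0).mono hdecay) hexp

/-- analytic core of the proof of the paper's Theorem 1:
if `e' = M e + g` with `⟨e, P g⟩ ≤ (κ/2) ‖e‖²` on `[0, ∞)`, where `P` is the
positive definite solution of `P M + Mᵀ P = -(2μ)•1` and `0 ≤ κ < 2μ`, then the
Lyapunov function `V(t) = ⟨e(t), P e(t)⟩` satisfies
`V(t) ≤ exp(((κ - 2μ)/λ_max(P)) t) V(0)`, and `e(t) → 0`. -/
theorem lyapunov_exponential_decay {m : ℕ}
    (M P : Matrix (Fin m) (Fin m) ℝ) (hM : IsHurwitz M)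
    (μ : ℝ) (hμ : 0 < μ) (hP : P.PosDef)
    (hLyap : P * M + Mᵀ * P = (-(2 * μ)) • (1 : Matrix (Fin m) (Fin m) ℝ))
    (κ : ℝ) (hκ0 : 0 ≤ κ) (hκ : κ < 2 * μ)
    (e g : ℝ → (Fin m → ℝ))
    (he : ∀ t ≥ (0 : ℝ), HasDerivAt e (M.mulVec (e t) + g t) t)
    (hg : ∀ t ≥ (0 : ℝ), e t ⬝ᵥ P.mulVec (g t) ≤ (κ / 2) * (e t ⬝ᵥ e t)) :
    (∀ t ≥ (0 : ℝ), e t ⬝ᵥ P.mulVec (e t) ≤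
        Real.exp ((κ - 2 * μ) / maxEig P * t) * (e 0 ⬝ᵥ P.mulVec (e 0))) ∧
    Filter.Tendsto e Filter.atTop (nhds 0) :=
  lyapunov_exponential_decay_general M P μ hP hLyap κ hκ e g he hg
end
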